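/- Let t ≥ 2, let (X, A, W) be a convex A-metric space, let f : X → X, and let u ∈ X be a fixed point of f. Suppose δ ∈ [0,1) is such that A(fx, fx, ..., fx, fy) ≤ δ·A(x, x, ..., x, y) + t·δ·A(fx, fx, ..., fx, x) for all x, y ∈ X. Let α_1, ..., α_t ∈ [0,1] with α_1 + ... + α_t = 1, let x ∈ X, and set x' = W(x, x, ..., x, f x; α_1, ..., α_t). Then A(u, u, ..., u, x') ≤ [1 − (1 − δ)·α_t]·A(u, u, ..., u, x). -/
import Mathlib


open Filter

/-- The tuple `(x, x, ..., x, y)` with `x` in the first `t-1` slots and `y` in the last. -/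
def avec {X : Type*} (t : ℕ) (x y : X) : Fin t → X :=
  fun j => if (j : ℕ) < t - 1 then x else y

/-- `A` is an A-metric on `X` (with `t` arguments). -/
def IsAMetric {X : Type*} (t : ℕ) (A : (Fin t → X) → ℝ) : Prop :=
  (∀ x : Fin t → X, 0 ≤ A x) ∧
  (∀ x : Fin t → X, A x = 0 ↔ ∀ i j, x i = x j) ∧
  (∀ (x : Fin t → X) (y : X), A x ≤ ∑ i, A (avec t (x i) y))

/-- `W` is a convex structure on the A-metric space `(X, A)`. -/
def IsConvexStructure {X : Type*} (t : ℕ) (A : (Fin t → X) → ℝ)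
    (W : (Fin t → X) → (Fin t → ℝ) → X) : Prop :=
  ∀ (u : Fin t → X) (xs : Fin t → X) (a : Fin t → ℝ),
    (∀ i, a i ∈ Set.Icc (0 : ℝ) 1) → (∑ i, a i = 1) →
    A (fun j => if (j : ℕ) < t - 1 then u j else W xs a) ≤
      ∑ i, a i * A (fun j => if (j : ℕ) < t - 1 then u j else xs i)

/-- One-step estimate for the Mann iteration in a convex A-metric space. -/
theorem mann_one_step_estimate
    {X : Type*} (t : ℕ) (ht : 2 ≤ t)
    (A : (Fin t → X) → ℝ) (hA : IsAMetric t A)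
    (W : (Fin t → X) → (Fin t → ℝ) → X) (hW : IsConvexStructure t A W)
    (f : X → X) (u : X) (hu : f u = u)
    (δ : ℝ) (hδ0 : 0 ≤ δ) (hδ1 : δ < 1)
    (hcontr : ∀ x y : X,
      A (avec t (f x) (f y)) ≤
        δ * A (avec t x y) + (t : ℝ) * δ * A (avec t (f x) x))
    (α : Fin t → ℝ) (hα : ∀ i, α i ∈ Set.Icc (0 : ℝ) 1) (hαsum : ∑ i, α i = 1)
    (x : X) :
    A (avec t u (W (avec t x (f x)) α)) ≤
      (1 - (1 - δ) * α ⟨t - 1, by omega⟩) * A (avec t u x) := by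
  set L : Fin t := ⟨t - 1, by omega⟩ with hL
  set a := A (avec t u x) with ha
  have ha0 : 0 ≤ a := hA.1 _
  have hαL0 : 0 ≤ α L := (hα L).1
  -- A(avec t u u) = 0
  have huu : A (avec t u u) = 0 := by
    apply (hA.2.1 _).mpr
    intro i j
    simp [avec]
  -- b ≤ δ a
  have hb : A (avec t u (f x)) ≤ δ * a := by
    have h := hcontr u x
    rw [hu, huu] at h
    simpa using h
  -- convexity step
  have hconv := hW (avec t u u) (avec t x (f x)) α hα hαsum
  have e1 : (fun j : Fin t => if (j : ℕ) < t - 1 then avec t u u j else W (avec t x (f x)) α)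
      = avec t u (W (avec t x (f x)) α) := by
    funext j
    simp only [avec]
    split <;> simp_all
  have e2 : ∀ i : Fin t,
      (fun j : Fin t => if (j : ℕ) < t - 1 then avec t u u j else avec t x (f x) i)
        = avec t u (avec t x (f x) i) := by
    intro i
    funext j
    simp only [avec]
    split <;> simp_all
  rw [e1] at hconv
  simp only [e2] at hconv
  -- evaluate the sum
  have hsum : ∑ i : Fin t, α i * A (avec t u (avec t x (f x) i))
      = α L * A (avec t u (f x)) + (1 - α L) * a := by
    rw [← Finset.add_sum_erase _ _ (Finset.mem_univ L)]
    congr 1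
    · have : avec t x (f x) L = f x := by simp [avec, hL]
      rw [this]
    · have hrest : ∀ i ∈ Finset.univ.erase L, α i * A (avec t u (avec t x (f x) i)) = α i * a := by
        intro i hi
        have hiL : i ≠ L := (Finset.mem_erase.mp hi).1
        have hlt : (i : ℕ) < t - 1 := by
          have := i.2
          have : (i : ℕ) ≠ t - 1 := fun h => hiL (Fin.ext h)
          omega
        have : avec t x (f x) i = x := by simp [avec, hlt]
        rw [this]
      rw [Finset.sum_congr rfl hrest, ← Finset.sum_mul]
      have : ∑ i ∈ Finset.univ.erase L, α i = 1 - α L := by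
        have := Finset.add_sum_erase Finset.univ α (Finset.mem_univ L)
        rw [hαsum] at this
        linarith
      rw [this]
  rw [hsum] at hconv
  have : α L * A (avec t u (f x)) + (1 - α L) * a ≤ (1 - (1 - δ) * α L) * a := by
    have h1 : α L * A (avec t u (f x)) ≤ α L * (δ * a) :=
      mul_le_mul_of_nonneg_left hb hαL0
    nlinarith
  linarith
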